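/- arXiv:1710.07858 — 2 statements merged into one kernel-verified Lean document; each statement's English description precedes it below -/
import Mathlib

section
/- Assume ψ is convex with Crit_ψ ≠ ∅, and let u be a global solution of the first-order gradient system (DS-1). Then lim_{t→∞} ‖u′(t)‖ = 0; there exists x̂⋆ ∈ Crit_ψ such that u(t) converges weakly to x̂⋆ as t → ∞ (i.e. ⟨u(t), y⟩ → ⟨x̂⋆, y⟩ for every y ∈ H); and ∫₀^∞ (ψ(u(s)) − min_H ψ) ds ≤ ½·dist(u(0), Crit_ψ)², where dist(x, Crit_ψ) = inf_{y ∈ Crit_ψ} ‖x − y‖. -/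
/-!
Along the flow, `ψ ∘ u` decreases with derivative `-‖∇ψ(u)‖²`, and convexity makes `‖∇ψ(u)‖²`
decrease as well: its derivative is `-2 ⟪D∇ψ(u) ∇ψ(u), ∇ψ(u)⟫` and `D∇ψ` is positive
semidefinite. A nonnegative decreasing function with bounded integrals over `[0, T]` tends to `0`.

For a minimizer `z`, convexity gives `(½‖u - z‖²)' = -⟪∇ψ(u), u - z⟫ ≤ ψ z - ψ(u) ≤ 0`. Hence
`‖u - z‖` decreases and `∫₀^T (ψ(u) - min ψ) ≤ ½‖u(0) - z‖²`; letting `T → ∞` and optimizing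
over `z` gives the integral bound, and it also forces `ψ(u(t)) → min ψ`.

Weak convergence is Opial's lemma: `‖u(t) - z‖` converges for every minimizer `z`, and every
weak sequential cluster point of the (bounded) trajectory is a minimizer, by weak lower
semicontinuity of the convex differentiable function `ψ`.
-/

open Filter MeasureTheory Set Topology
open scoped RealInnerProductSpace

section RealAnalysis

variable {f g g' : ℝ → ℝ} {a : ℝ}

theorem antitoneOn_Ici_of_hasDerivAt_nonpos (hg : ContinuousOn g (Ici a))
    (hg' : ∀ t > a, HasDerivAt g (g' t) t) (hneg : ∀ t > a, g' t ≤ 0) : AntitoneOn g (Ici a) :=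
  antitoneOn_of_hasDerivWithinAt_nonpos (convex_Ici a) hg
    (fun t ht => (hg' t (by simpa using ht)).hasDerivWithinAt)
    fun t ht => hneg t (by simpa using ht)

theorem integral_le_sub_of_hasDerivAt_of_le_neg (hg : ContinuousOn g (Ici a))
    (hg' : ∀ t > a, HasDerivAt g (g' t) t) (hf : ContinuousOn f (Ici a))
    (hfg : ∀ t > a, f t ≤ -g' t) {T : ℝ} (hT : a ≤ T) : ∫ t in a..T, f t ≤ g a - g T := by
  have := intervalIntegral.integral_le_sub_of_hasDeriv_right_of_le (g := fun t => -g t) hT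
    (hg.mono Icc_subset_Ici_self).neg (fun t ht => (hg' t ht.1).neg.hasDerivWithinAt)
    ((hf.mono Icc_subset_Ici_self).integrableOn_Icc) fun t ht => hfg t ht.1
  linarith

theorem tendsto_zero_of_antitoneOn_of_integral_le {B : ℝ} (hf : AntitoneOn f (Ici 0))
    (hf0 : ∀ t ≥ 0, 0 ≤ f t) (hB : ∀ T ≥ 0, ∫ t in (0 : ℝ)..T, f t ≤ B) :
    Tendsto f atTop (𝓝 0) := by
  have hle : ∀ T > 0, f T ≤ B / T := fun T hT => by
    rw [le_div_iff₀ hT, mul_comm]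
    calc T * f T = ∫ _ in (0 : ℝ)..T, f T := by simp
      _ ≤ ∫ t in (0 : ℝ)..T, f t := intervalIntegral.integral_mono_on hT.le
          intervalIntegrable_const (hf.mono (by simp [uIcc_of_le hT.le, Icc_subset_Ici_self])
            |>.intervalIntegrable) fun t ht => hf ht.1 hT.le ht.2
      _ ≤ B := hB T hT.le
  exact tendsto_of_tendsto_of_tendsto_of_le_of_le' tendsto_const_nhds
    (tendsto_const_nhds.div_atTop tendsto_id) ((eventually_ge_atTop 0).mono hf0)
    ((eventually_gt_atTop 0).mono hle)

theorem lintegral_Ioi_ofReal_le_of_integral_le {B : ℝ} (hf : ContinuousOn f (Ici 0))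
    (hf0 : ∀ t ≥ 0, 0 ≤ f t) (hB : ∀ T ≥ 0, ∫ t in (0 : ℝ)..T, f t ≤ B) :
    ∫⁻ t in Ioi 0, ENNReal.ofReal (f t) ≤ ENNReal.ofReal B := by
  have hloc : ∀ T, IntegrableOn f (Ioc 0 T) :=
    fun T => (hf.mono Icc_subset_Ici_self).integrableOn_Icc.mono_set Ioc_subset_Icc_self
  have hnorm : ∀ᶠ T in atTop, ∫ t in (0 : ℝ)..T, ‖f t‖ ≤ B := by
    filter_upwards [eventually_ge_atTop 0] with T hT
    rw [intervalIntegral.integral_congr fun t ht => Real.norm_of_nonneg (hf0 t ?_)]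
    · exact hB T hT
    · exact (uIcc_of_le hT ▸ ht).1
  have hint : IntegrableOn f (Ioi 0) :=
    integrableOn_Ioi_of_intervalIntegral_norm_bounded B 0 hloc tendsto_id hnorm
  rw [← ofReal_integral_eq_lintegral_ofReal hint
    ((ae_restrict_mem measurableSet_Ioi).mono fun t ht => hf0 t (le_of_lt ht))]
  exact ENNReal.ofReal_le_ofReal (le_of_tendsto
    (intervalIntegral_tendsto_integral_Ioi 0 hint tendsto_id) ((eventually_ge_atTop 0).mono hB))

theorem AntitoneOn.exists_tendsto_atTop (hf : AntitoneOn f (Ici a)) (hf0 : ∀ t ≥ a, 0 ≤ f t) :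
    ∃ L, Tendsto f atTop (𝓝 L) := by
  have hanti : Antitone fun t => f (max t a) := fun s t hst =>
    hf (le_max_right s a) (le_max_right t a) (max_le_max hst le_rfl)
  refine ⟨_, (tendsto_atTop_ciInf hanti ⟨0, ?_⟩).congr' ?_⟩
  · rintro _ ⟨t, rfl⟩
    exact hf0 _ (le_max_right t a)
  · filter_upwards [eventually_ge_atTop a] with t ht
    rw [max_eq_left ht]

end RealAnalysis

theorem Metric.le_apply_infDist {α β : Type*} [PseudoMetricSpace α]
    [TopologicalSpace β] [LinearOrder β] [ClosedIciTopology β] {x : α} {s : Set α}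
    (hs : s.Nonempty) {g : ℝ → β} (hg : MonotoneOn g (Ici 0))
    (hgc : ContinuousAt g (infDist x s)) {b : β} (h : ∀ z ∈ s, b ≤ g (dist x z)) :
    b ≤ g (infDist x s) := by
  have hlim : Tendsto g (𝓝[>] (infDist x s)) (𝓝 (g (infDist x s))) :=
    hgc.tendsto.mono_left nhdsWithin_le_nhds
  refine ge_of_tendsto hlim ?_
  filter_upwards [self_mem_nhdsWithin] with r hr
  obtain ⟨z, hz, hzr⟩ := (infDist_lt_iff hs).1 hr
  exact (h z hz).trans (hg dist_nonneg (infDist_nonneg.trans hr.le) hzr.le)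

section

variable {H : Type*} [NormedAddCommGroup H] [InnerProductSpace ℝ H]

theorem IsLocalMin.gradient_eq_zero [CompleteSpace H] {ψ : H → ℝ} {x : H} (h : IsLocalMin ψ x) :
    gradient ψ x = 0 := by
  rw [gradient, h.fderiv_eq_zero, map_zero]

theorem ContDiff.contDiff_gradient [CompleteSpace H] {ψ : H → ℝ} {m n : WithTop ℕ∞}
    (hψ : ContDiff ℝ m ψ) (hnm : n + 1 ≤ m) : ContDiff ℝ n (gradient ψ) :=
  (InnerProductSpace.toDual ℝ H).symm.contDiff.comp (hψ.fderiv_right hnm)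

namespace ConvexOn

variable [CompleteSpace H] {ψ : H → ℝ}

theorem sub_le_inner_gradient (hconv : ConvexOn ℝ univ ψ) {x : H} (hψ : DifferentiableAt ℝ ψ x)
    (y : H) : ψ x - ψ y ≤ ⟪gradient ψ x, x - y⟫ := by
  let L : ℝ →ᵃ[ℝ] H := AffineMap.lineMap x y
  have hline : ConvexOn ℝ univ (ψ ∘ L) := hconv.comp_affineMap L
  have hderiv : HasDerivAt (ψ ∘ L) ⟪gradient ψ x, y - x⟫ 0 := by
    have := hψ.hasGradientAt.hasFDerivAt.comp_hasDerivAt_of_eq (0 : ℝ)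
      (AffineMap.hasDerivAt_lineMap (a := x) (b := y)) (AffineMap.lineMap_apply_zero x y).symm
    simpa only [InnerProductSpace.toDual_apply_apply] using this
  have := hline.le_slope_of_hasDerivAt (mem_univ 0) (mem_univ 1) one_pos hderiv
  rw [slope_def_field] at this
  simp only [L, Function.comp_apply, AffineMap.lineMap_apply_one, AffineMap.lineMap_apply_zero,
    sub_zero, div_one] at this
  rw [← neg_sub y x, inner_neg_right]
  linarith

theorem le_of_gradient_eq_zero (hconv : ConvexOn ℝ univ ψ) {x : H}
    (hψ : DifferentiableAt ℝ ψ x) (hx : gradient ψ x = 0) (y : H) : ψ x ≤ ψ y := by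
  simpa [hx] using hconv.sub_le_inner_gradient hψ y

theorem inner_gradient_sub_gradient_nonneg (hconv : ConvexOn ℝ univ ψ) {x y : H}
    (hx : DifferentiableAt ℝ ψ x) (hy : DifferentiableAt ℝ ψ y) :
    0 ≤ ⟪gradient ψ x - gradient ψ y, x - y⟫ := by
  have hxy := hconv.sub_le_inner_gradient hx y
  have hyx := hconv.sub_le_inner_gradient hy x
  rw [← neg_sub x y, inner_neg_right] at hyx
  rw [inner_sub_left]
  linarith

theorem inner_apply_self_nonneg (hconv : ConvexOn ℝ univ ψ) (hψ : Differentiable ℝ ψ)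
    {A : H →L[ℝ] H} {z : H} (hA : HasFDerivAt (gradient ψ) A z) (v : H) : 0 ≤ ⟪A v, v⟫ := by
  have hmono : Monotone fun s : ℝ => ⟪gradient ψ (z + s • v), v⟫ := by
    intro s t hst
    have := hconv.inner_gradient_sub_gradient_nonneg (hψ (z + t • v)) (hψ (z + s • v))
    rw [add_sub_add_left_eq_sub, ← sub_smul, inner_smul_right, inner_sub_left] at this
    rcases hst.eq_or_lt with rfl | hlt
    · rfl
    · exact sub_nonneg.mp ((mul_nonneg_iff_of_pos_left (sub_pos.2 hlt)).1 this)
  have hderiv : HasDerivAt (fun s : ℝ => ⟪gradient ψ (z + s • v), v⟫) ⟪A v, v⟫ 0 := by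
    have hline : HasDerivAt (fun s : ℝ => z + s • v) v 0 := by
      simpa using ((hasDerivAt_id (0 : ℝ)).smul_const v).const_add z
    have := hA.comp_hasDerivAt_of_eq (0 : ℝ) hline (by simp)
    simpa using this.inner ℝ (hasDerivAt_const (0 : ℝ) v)
  exact hderiv.deriv ▸ hmono.deriv_nonneg

end ConvexOn

section WeakConvergence

def WeakTendsto {ι : Type*} (x : ι → H) (l : Filter ι) (p : H) : Prop :=
  ∀ y : H, Tendsto (fun i => ⟪x i, y⟫) l (𝓝 ⟪p, y⟫)

variable {ι : Type*} {l : Filter ι}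

theorem ConvexOn.le_of_weakTendsto [CompleteSpace H] [l.NeBot] {ψ : H → ℝ}
    (hconv : ConvexOn ℝ univ ψ) {p : H} (hψ : DifferentiableAt ℝ ψ p) {x : ι → H}
    (hx : WeakTendsto x l p) {c : ℝ} (hc : Tendsto (ψ ∘ x) l (𝓝 c)) : ψ p ≤ c := by
  have hinner : Tendsto (fun i => ⟪gradient ψ p, p - x i⟫) l (𝓝 0) := by
    have := (hx (gradient ψ p)).const_sub ⟪p, gradient ψ p⟫
    simpa only [sub_self, inner_sub_right, real_inner_comm] using this
  have hlim := hc.add hinner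
  rw [add_zero] at hlim
  refine ge_of_tendsto hlim (Eventually.of_forall fun i => ?_)
  have := hconv.sub_le_inner_gradient hψ (x i)
  simp only [Function.comp_apply]
  linarith

theorem exists_weakTendsto_subseq [CompleteSpace H] {x : ℕ → H} {C : ℝ} (hC : ∀ n, ‖x n‖ ≤ C) :
    ∃ p : H, ∃ φ : ℕ → ℕ, StrictMono φ ∧ WeakTendsto (x ∘ φ) atTop p := by
  -- Banach–Alaoglu in the separable closed span `K` of the sequence, then Riesz in `K`.
  set K : Submodule ℝ H := (Submodule.span ℝ (range x)).topologicalClosure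
  have : CompleteSpace K := (Submodule.isClosed_topologicalClosure _).completeSpace_coe
  have : TopologicalSpace.SeparableSpace K := by
    have : TopologicalSpace.IsSeparable (K : Set H) := by
      rw [Submodule.topologicalClosure_coe]
      exact ((countable_range x).isSeparable.span (R := ℝ)).closure
    exact this.separableSpace
  have hxK : ∀ n, x n ∈ K :=
    fun n => Submodule.le_topologicalClosure _ (Submodule.subset_span (mem_range_self n))
  let f : ℕ → WeakDual ℝ K := fun n => (innerSL ℝ (x n)).comp K.subtypeL
  have hf : ∀ n, ‖WeakDual.toStrongDual (f n)‖ ≤ C := fun n =>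
    ContinuousLinearMap.opNorm_le_bound _ ((norm_nonneg _).trans (hC n)) fun k =>
      (norm_inner_le_norm _ _).trans (mul_le_mul_of_nonneg_right (hC n) (norm_nonneg _))
  obtain ⟨g, -, φ, hφ, hg⟩ := WeakDual.isSeqCompact_closedBall ℝ K 0 C
    fun n => mem_closedBall_zero_iff.mpr (hf n)
  set p : K := (InnerProductSpace.toDual ℝ K).symm (WeakDual.toStrongDual g)
  refine ⟨p, φ, hφ, fun y => ?_⟩
  have hproj : ∀ z ∈ K, ⟪z, y⟫ = ⟪z, K.starProjection y⟫ := fun z hz => by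
    rw [← K.inner_starProjection_left_eq_right, K.starProjection_eq_self_iff.mpr hz]
  have hlim : Tendsto (fun n => ⟪x (φ n), K.starProjection y⟫) atTop
      (𝓝 ⟪(p : H), K.starProjection y⟫) := by
    convert ((WeakDual.eval_continuous (K.orthogonalProjectionOnto y)).tendsto g).comp hg
      using 2
    · rfl
    · rw [K.starProjection_apply, ← Submodule.coe_inner, InnerProductSpace.toDual_symm_apply]
      rfl
  simpa only [Function.comp_apply, hproj _ (hxK _), hproj _ p.2] using hlim

theorem WeakTendsto.eq_of_tendsto_norm_sub {u : ι → H} {p q : H} {τ σ : ℕ → ι}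
    (hτ : Tendsto τ atTop l) (hσ : Tendsto σ atTop l) (hp : WeakTendsto (u ∘ τ) atTop p)
    (hq : WeakTendsto (u ∘ σ) atTop q) {Lp Lq : ℝ} (hLp : Tendsto (‖u · - p‖) l (𝓝 Lp))
    (hLq : Tendsto (‖u · - q‖) l (𝓝 Lq)) : p = q := by
  -- `2 ⟪u, p - q⟫ = ‖u - q‖² - ‖u - p‖² + ‖p‖² - ‖q‖²` converges along `l`.
  set c := (Lq ^ 2 - Lp ^ 2 + ‖p‖ ^ 2 - ‖q‖ ^ 2) / 2
  have hlim : Tendsto (fun i => ⟪u i, p - q⟫) l (𝓝 c) := by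
    refine ((((hLq.pow 2).sub (hLp.pow 2)).add_const _).sub_const _ |>.div_const 2).congr
      fun i => ?_
    rw [inner_sub_right, norm_sub_sq_real, norm_sub_sq_real]
    ring
  have hpc : ⟪p, p - q⟫ = c := tendsto_nhds_unique (hp (p - q)) (hlim.comp hτ)
  have hqc : ⟪q, p - q⟫ = c := tendsto_nhds_unique (hq (p - q)) (hlim.comp hσ)
  rw [← sub_eq_zero, ← inner_self_eq_zero (𝕜 := ℝ), inner_sub_left, hpc, hqc, sub_self]

/-- **Opial's lemma**. -/
theorem exists_weakTendsto_of_tendsto_norm_sub [CompleteSpace H] [l.NeBot]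
    [l.IsCountablyGenerated] {u : ι → H} {S : Set H} (hS : S.Nonempty)
    (hdist : ∀ z ∈ S, ∃ L, Tendsto (‖u · - z‖) l (𝓝 L))
    (hcluster : ∀ τ : ℕ → ι, Tendsto τ atTop l → ∀ p, WeakTendsto (u ∘ τ) atTop p → p ∈ S) :
    ∃ p ∈ S, WeakTendsto u l p := by
  have hsubseq : ∀ τ : ℕ → ι, Tendsto τ atTop l →
      ∃ p ∈ S, ∃ φ : ℕ → ℕ, StrictMono φ ∧ WeakTendsto (u ∘ τ ∘ φ) atTop p := by
    intro τ hτ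
    obtain ⟨z, hz⟩ := hS
    obtain ⟨L, hL⟩ := hdist z hz
    obtain ⟨C, hC⟩ := (hL.comp hτ).bddAbove_range
    obtain ⟨p, φ, hφ, hp⟩ := exists_weakTendsto_subseq (x := u ∘ τ) (C := C + ‖z‖) fun n =>
      (norm_le_norm_sub_add _ z).trans (by gcongr; exact hC (mem_range_self n))
    exact ⟨p, hcluster _ (hτ.comp hφ.tendsto_atTop) p hp, φ, hφ, hp⟩
  obtain ⟨τ, hτ⟩ := l.exists_seq_tendsto
  obtain ⟨p, hpS, φ, hφ, hp⟩ := hsubseq τ hτ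
  obtain ⟨Lp, hLp⟩ := hdist p hpS
  refine ⟨p, hpS, fun y => tendsto_of_subseq_tendsto fun σ hσ => ?_⟩
  obtain ⟨q, hqS, φ', hφ', hq⟩ := hsubseq σ hσ
  obtain ⟨Lq, hLq⟩ := hdist q hqS
  have hqp : q = p := hq.eq_of_tendsto_norm_sub (hσ.comp hφ'.tendsto_atTop)
    (hτ.comp hφ.tendsto_atTop) hp hLq hLp
  exact ⟨φ', hqp ▸ hq y⟩

end WeakConvergence

def IsGradientFlow [CompleteSpace H] (ψ : H → ℝ) (u : ℝ → H) : Prop :=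
  ∀ t ∈ Ici (0 : ℝ), HasDerivWithinAt u (-gradient ψ (u t)) (Ici 0) t

namespace IsGradientFlow

variable [CompleteSpace H] {ψ : H → ℝ} {u : ℝ → H}

theorem continuousOn (hu : IsGradientFlow ψ u) : ContinuousOn u (Ici 0) :=
  fun t ht => (hu t ht).continuousWithinAt

theorem hasDerivAt (hu : IsGradientFlow ψ u) {t : ℝ} (ht : 0 < t) :
    HasDerivAt u (-gradient ψ (u t)) t :=
  (hu t ht.le).hasDerivAt (Ici_mem_nhds ht)

theorem hasDerivAt_comp (hu : IsGradientFlow ψ u) (hψ : Differentiable ℝ ψ) {t : ℝ}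
    (ht : 0 < t) : HasDerivAt (ψ ∘ u) (-‖gradient ψ (u t)‖ ^ 2) t := by
  have := (hψ (u t)).hasGradientAt.hasFDerivAt.comp_hasDerivAt t (hu.hasDerivAt ht)
  simpa only [InnerProductSpace.toDual_apply_apply, inner_neg_right,
    real_inner_self_eq_norm_sq] using this

theorem hasDerivAt_half_norm_sub_sq (hu : IsGradientFlow ψ u) (z : H) {t : ℝ} (ht : 0 < t) :
    HasDerivAt (fun s => 1 / 2 * ‖u s - z‖ ^ 2) (-⟪gradient ψ (u t), u t - z⟫) t := by
  have := (((hu.hasDerivAt ht).sub_const z).norm_sq).const_mul (1 / 2)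
  refine this.congr_deriv ?_
  rw [inner_neg_right, real_inner_comm]
  ring

theorem antitoneOn_comp (hu : IsGradientFlow ψ u) (hψ : Differentiable ℝ ψ) :
    AntitoneOn (ψ ∘ u) (Ici 0) :=
  antitoneOn_Ici_of_hasDerivAt_nonpos (hψ.continuous.comp_continuousOn hu.continuousOn)
    (fun _ ht => hu.hasDerivAt_comp hψ ht) fun _ _ => neg_nonpos.2 (sq_nonneg _)

theorem antitoneOn_norm_sub (hu : IsGradientFlow ψ u) (hconv : ConvexOn ℝ univ ψ)
    (hψ : Differentiable ℝ ψ) {z : H} (hz : gradient ψ z = 0) :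
    AntitoneOn (fun t => ‖u t - z‖) (Ici 0) := by
  have hsq : AntitoneOn (fun t => 1 / 2 * ‖u t - z‖ ^ 2) (Ici 0) := by
    refine antitoneOn_Ici_of_hasDerivAt_nonpos ?_ (fun _ ht => hu.hasDerivAt_half_norm_sub_sq z ht)
      fun t _ => ?_
    · exact continuousOn_const.mul ((hu.continuousOn.sub continuousOn_const).norm.pow 2)
    · have := hconv.sub_le_inner_gradient (hψ (u t)) z
      have := hconv.le_of_gradient_eq_zero (hψ z) hz (u t)
      linarith
  intro s hs t ht hst
  have := hsq hs ht hst
  exact le_of_pow_le_pow_left₀ two_ne_zero (norm_nonneg _) (by linarith)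

theorem antitoneOn_norm_gradient_sq (hu : IsGradientFlow ψ u) (hconv : ConvexOn ℝ univ ψ)
    (hψ : Differentiable ℝ ψ) (hgrad : Differentiable ℝ (gradient ψ)) :
    AntitoneOn (fun t => ‖gradient ψ (u t)‖ ^ 2) (Ici 0) := by
  refine antitoneOn_Ici_of_hasDerivAt_nonpos
    ((hgrad.continuous.comp_continuousOn hu.continuousOn).norm.pow 2)
    (fun t ht => ((hgrad (u t)).hasFDerivAt.comp_hasDerivAt t (hu.hasDerivAt ht)).norm_sq)
    fun t _ => ?_
  have := hconv.inner_apply_self_nonneg hψ (hgrad (u t)).hasFDerivAt (gradient ψ (u t))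
  rw [Function.comp_apply, map_neg, inner_neg_right, real_inner_comm]
  linarith

theorem integral_norm_gradient_sq_le (hu : IsGradientFlow ψ u) (hψ : Differentiable ℝ ψ)
    (hgrad : Continuous (gradient ψ)) {T : ℝ} (hT : 0 ≤ T) :
    ∫ t in (0 : ℝ)..T, ‖gradient ψ (u t)‖ ^ 2 ≤ ψ (u 0) - ψ (u T) :=
  integral_le_sub_of_hasDerivAt_of_le_neg (hψ.continuous.comp_continuousOn hu.continuousOn)
    (fun _ ht => hu.hasDerivAt_comp hψ ht)
    ((hgrad.comp_continuousOn hu.continuousOn).norm.pow 2) (fun _ _ => (neg_neg _).ge) hT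

theorem integral_sub_le (hu : IsGradientFlow ψ u) (hconv : ConvexOn ℝ univ ψ)
    (hψ : Differentiable ℝ ψ) (z : H) {T : ℝ} (hT : 0 ≤ T) :
    ∫ t in (0 : ℝ)..T, (ψ (u t) - ψ z) ≤ 1 / 2 * ‖u 0 - z‖ ^ 2 := by
  have := integral_le_sub_of_hasDerivAt_of_le_neg (f := fun t => ψ (u t) - ψ z)
    (g := fun t => 1 / 2 * ‖u t - z‖ ^ 2)
    (continuousOn_const.mul ((hu.continuousOn.sub continuousOn_const).norm.pow 2))
    (fun _ ht => hu.hasDerivAt_half_norm_sub_sq z ht)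
    ((hψ.continuous.comp_continuousOn hu.continuousOn).sub continuousOn_const)
    (fun t _ => (neg_neg (⟪gradient ψ (u t), u t - z⟫)).symm ▸
      hconv.sub_le_inner_gradient (hψ (u t)) z) hT
  have : 0 ≤ 1 / 2 * ‖u T - z‖ ^ 2 := by positivity
  linarith

theorem tendsto_norm_gradient (hu : IsGradientFlow ψ u) (hconv : ConvexOn ℝ univ ψ)
    (hψ : Differentiable ℝ ψ) (hgrad : Differentiable ℝ (gradient ψ)) {m : ℝ}
    (hm : ∀ x, m ≤ ψ x) : Tendsto (fun t => ‖gradient ψ (u t)‖) atTop (𝓝 0) := by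
  have := tendsto_zero_of_antitoneOn_of_integral_le (B := ψ (u 0) - m)
    (hu.antitoneOn_norm_gradient_sq hconv hψ hgrad) (fun _ _ => sq_nonneg _) fun T hT => by
      linarith [hu.integral_norm_gradient_sq_le hψ hgrad.continuous hT, hm (u T)]
  simpa using this.sqrt

theorem tendsto_comp_of_gradient_eq_zero (hu : IsGradientFlow ψ u) (hconv : ConvexOn ℝ univ ψ)
    (hψ : Differentiable ℝ ψ) {z : H} (hz : gradient ψ z = 0) :
    Tendsto (fun t => ψ (u t)) atTop (𝓝 (ψ z)) := by
  have hmin := hconv.le_of_gradient_eq_zero (hψ z) hz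
  have := tendsto_zero_of_antitoneOn_of_integral_le (f := fun t => ψ (u t) - ψ z)
    (fun s hs t ht hst => sub_le_sub_right (hu.antitoneOn_comp hψ hs ht hst) _)
    (fun t _ => sub_nonneg.2 (hmin (u t))) fun T hT => hu.integral_sub_le hconv hψ z hT
  simpa using this.add_const (ψ z)

theorem exists_weakTendsto (hu : IsGradientFlow ψ u) (hconv : ConvexOn ℝ univ ψ)
    (hψ : Differentiable ℝ ψ) (hcrit : {x : H | gradient ψ x = 0}.Nonempty) :
    ∃ p, gradient ψ p = 0 ∧ WeakTendsto u atTop p := by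
  obtain ⟨z₀, hz₀⟩ := hcrit
  refine exists_weakTendsto_of_tendsto_norm_sub ⟨z₀, hz₀⟩
    (fun z hz => (hu.antitoneOn_norm_sub hconv hψ hz).exists_tendsto_atTop
      fun _ _ => norm_nonneg _) fun τ hτ p hp => ?_
  -- Weak lower semicontinuity: a weak cluster point is a minimizer, hence critical.
  have hpz : ψ p ≤ ψ z₀ := hconv.le_of_weakTendsto (hψ p) hp
    ((hu.tendsto_comp_of_gradient_eq_zero hconv hψ hz₀).comp hτ)
  exact IsLocalMin.gradient_eq_zero <| Eventually.of_forall fun x =>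
    hpz.trans (hconv.le_of_gradient_eq_zero (hψ z₀) hz₀ x)

theorem lintegral_sub_le (hu : IsGradientFlow ψ u) (hconv : ConvexOn ℝ univ ψ)
    (hψ : Differentiable ℝ ψ) {z : H} (hz : gradient ψ z = 0) :
    ∫⁻ t in Ioi 0, ENNReal.ofReal (ψ (u t) - ψ z) ≤ ENNReal.ofReal (1 / 2 * ‖u 0 - z‖ ^ 2) :=
  lintegral_Ioi_ofReal_le_of_integral_le
    ((hψ.continuous.comp_continuousOn hu.continuousOn).sub continuousOn_const)
    (fun t _ => sub_nonneg.2 (hconv.le_of_gradient_eq_zero (hψ z) hz (u t)))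
    fun _ hT => hu.integral_sub_le hconv hψ z hT

end IsGradientFlow

end

/-- Proposition 4 (i): if `ψ` is convex with `Crit ψ ≠ ∅` and `u` is a global solution of
`u' = -∇ψ(u)`, then `‖u'(t)‖ → 0`, `u(t)` converges weakly to some `x̂⋆ ∈ Crit ψ`, and
`∫₀^∞ (ψ(u s) - min ψ) ds ≤ ½ dist(u 0, Crit ψ)²`. -/
theorem stmt_11 {H : Type*} [NormedAddCommGroup H] [InnerProductSpace ℝ H] [CompleteSpace H]
    (ψ : H → ℝ) (hψ : ContDiff ℝ 2 ψ) (hconv : ConvexOn ℝ univ ψ)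
    (hcrit : {x : H | gradient ψ x = 0}.Nonempty)
    (u u' : ℝ → H)
    (hu : ∀ t ∈ Ici (0:ℝ), HasDerivWithinAt u (u' t) (Ici 0) t)
    (hode : ∀ t ∈ Ici (0:ℝ), u' t = -(gradient ψ (u t))) :
    Tendsto (fun t => ‖u' t‖) atTop (nhds 0) ∧
      (∃ xstar : H, gradient ψ xstar = 0 ∧
        ∀ y : H, Tendsto (fun t => (inner ℝ (u t) y : ℝ)) atTop (nhds (inner ℝ xstar y))) ∧
      ∫⁻ s in Ioi (0:ℝ), ENNReal.ofReal (ψ (u s) - ⨅ z : H, ψ z) ≤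
        ENNReal.ofReal ((1/2) * Metric.infDist (u 0) {x : H | gradient ψ x = 0} ^ 2) := by
  have hflow : IsGradientFlow ψ u := fun t ht => hode t ht ▸ hu t ht
  have hd : Differentiable ℝ ψ := hψ.differentiable (by norm_num)
  have hgrad : Differentiable ℝ (gradient ψ) :=
    (hψ.contDiff_gradient (n := 1) (by norm_num)).differentiable one_ne_zero
  have hmin : ∀ z, gradient ψ z = 0 → ∀ x, ψ z ≤ ψ x :=
    fun z hz => hconv.le_of_gradient_eq_zero (hd z) hz
  obtain ⟨z₀, hz₀⟩ := hcrit
  refine ⟨?_, hflow.exists_weakTendsto hconv hd ⟨z₀, hz₀⟩, ?_⟩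
  · refine (hflow.tendsto_norm_gradient hconv hd hgrad (hmin z₀ hz₀)).congr' ?_
    filter_upwards [eventually_ge_atTop 0] with t ht
    rw [hode t ht, norm_neg]
  · rw [ciInf_eq_of_forall_ge_of_forall_gt_exists_lt (hmin z₀ hz₀) fun _ hw => ⟨z₀, hw⟩]
    refine Metric.le_apply_infDist (g := fun r => ENNReal.ofReal (1 / 2 * r ^ 2))
      ⟨z₀, hz₀⟩ (fun a ha b _ hab => ENNReal.ofReal_le_ofReal (by gcongr))
      (ENNReal.continuous_ofReal.comp (by fun_prop)).continuousAt
      fun z hz => ?_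
    rw [dist_eq_norm, le_antisymm (hmin z₀ hz₀ z) (hmin z hz z₀)]
    exact hflow.lintegral_sub_le hconv hd hz
end

section
/- Let ψ₁, ψ₂ : H → ℝ be convex functions of class C² such that ‖∇ψ₁(z)‖ = ‖∇ψ₂(z)‖ for all z ∈ H and inf_{z ∈ H} ‖∇ψ₁(z)‖ = 0. Then there exists a constant c ∈ ℝ such that ψ₁(x) = ψ₂(x) + c for all x ∈ H. -/
/-!
Run the gradient flow `γ' = -∇ψ₁ γ` from a point `x₀`. Differentiating `‖∇ψ₁‖² = ‖∇ψ₂‖²` and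
using the symmetry of Hessians gives `∇²ψ₁ ∇ψ₁ = ∇²ψ₂ ∇ψ₂`, so along the flow the derivative of
`‖∇ψ₁ - ∇ψ₂‖²` is `2 ⟪e, ∇²ψ₂ e⟫ ≥ 0` with `e = ∇ψ₁ - ∇ψ₂`: the gap between the gradients never
shrinks. Convexity of `ψ₁` makes `‖∇ψ₁ (γ t)‖` nonincreasing, hence
`T ‖∇ψ₁ (γ T)‖² ≤ ψ₁ x₀ - ψ₁ (γ T)`, and the supporting hyperplane at a point `z` bounds `ψ₁` from
below on the trajectory, which has length at most `T ‖∇ψ₁ x₀‖`. Letting `T → ∞` and then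
`‖∇ψ₁ z‖ → 0` gives `∇ψ₁ x₀ = ∇ψ₂ x₀`.

The flow exists for all times since `∇ψ₁` is `C¹` and the speed is bounded by `‖∇ψ₁ x₀‖`. Each
extension step goes at least half as far as any extension could (up to length `1`); if the
lengths stayed bounded, the endpoints would converge and local existence near the limit, uniform
in the initial point, would force steps of a fixed length. This avoids uniqueness of solutions.
-/

open Filter Set Metric Topology InnerProductSpace
open scoped Gradient RealInnerProductSpace

section Monotone

variable {a b : ℝ}

theorem monotoneOn_Icc_of_hasDerivWithinAt_nonneg {φ φ' : ℝ → ℝ}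
    (hφ : ∀ t ∈ Icc a b, HasDerivWithinAt φ (φ' t) (Icc a b) t) (hφ' : ∀ t ∈ Ioo a b, 0 ≤ φ' t) :
    MonotoneOn φ (Icc a b) :=
  monotoneOn_of_hasDerivWithinAt_nonneg (convex_Icc a b) (fun t ht ↦ (hφ t ht).continuousWithinAt)
    (fun t ht ↦ by
      rw [interior_Icc] at ht ⊢
      exact (hφ t (Ioo_subset_Icc_self ht)).mono Ioo_subset_Icc_self)
    (by rwa [interior_Icc])

theorem antitoneOn_Icc_of_hasDerivWithinAt_nonpos {φ φ' : ℝ → ℝ}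
    (hφ : ∀ t ∈ Icc a b, HasDerivWithinAt φ (φ' t) (Icc a b) t) (hφ' : ∀ t ∈ Ioo a b, φ' t ≤ 0) :
    AntitoneOn φ (Icc a b) :=
  antitoneOn_of_hasDerivWithinAt_nonpos (convex_Icc a b) (fun t ht ↦ (hφ t ht).continuousWithinAt)
    (fun t ht ↦ by
      rw [interior_Icc] at ht ⊢
      exact (hφ t (Ioo_subset_Icc_self ht)).mono Ioo_subset_Icc_self)
    (by rwa [interior_Icc])

variable {F : Type*} [NormedAddCommGroup F] [InnerProductSpace ℝ F] {u u' : ℝ → F}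

theorem monotoneOn_Icc_norm_of_inner_deriv_nonneg
    (hu : ∀ t ∈ Icc a b, HasDerivWithinAt u (u' t) (Icc a b) t)
    (hu' : ∀ t ∈ Ioo a b, 0 ≤ ⟪u t, u' t⟫) : MonotoneOn (‖u ·‖) (Icc a b) := by
  have := monotoneOn_Icc_of_hasDerivWithinAt_nonneg (fun t ht ↦ (hu t ht).norm_sq)
    (fun t ht ↦ mul_nonneg zero_le_two (hu' t ht))
  exact fun s hs t ht hst ↦ (sq_le_sq₀ (norm_nonneg _) (norm_nonneg _)).1 (this hs ht hst)

theorem antitoneOn_Icc_norm_of_inner_deriv_nonpos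
    (hu : ∀ t ∈ Icc a b, HasDerivWithinAt u (u' t) (Icc a b) t)
    (hu' : ∀ t ∈ Ioo a b, ⟪u t, u' t⟫ ≤ 0) : AntitoneOn (‖u ·‖) (Icc a b) := by
  have := antitoneOn_Icc_of_hasDerivWithinAt_nonpos (fun t ht ↦ (hu t ht).norm_sq)
    (fun t ht ↦ mul_nonpos_of_nonneg_of_nonpos zero_le_two (hu' t ht))
  exact fun s hs t ht hst ↦ (sq_le_sq₀ (norm_nonneg _) (norm_nonneg _)).1 (this hs ht hst)

end Monotone

section ODE

variable {E : Type*} [NormedAddCommGroup E] [NormedSpace ℝ E]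

theorem ContDiffAt.exists_forall_mem_closedBall_forall_exists_isIntegralCurveOn_Icc
    [CompleteSpace E] {V : E → E} {p : E} (hV : ContDiffAt ℝ 1 V p) :
    ∃ r > (0 : ℝ), ∃ ε > (0 : ℝ), ∀ q ∈ closedBall p r, ∀ t₀ : ℝ, ∃ α : ℝ → E, α t₀ = q ∧
      IsIntegralCurveOn α (fun _ ↦ V) (Icc t₀ (t₀ + ε)) := by
  obtain ⟨r, hr, ε, hε, hsol⟩ :=
    hV.exists_forall_mem_closedBall_exists_eq_forall_mem_Ioo_hasDerivAt 0
  refine ⟨r, hr, ε / 2, by positivity, fun q hq t₀ ↦ ?_⟩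
  obtain ⟨α, hα0, hα⟩ := hsol q hq
  refine ⟨fun t ↦ α (t - t₀), by simpa using hα0, fun t ht ↦ ?_⟩
  have hmem : t - t₀ ∈ Ioo (0 - ε) (0 + ε) := by constructor <;> linarith [ht.1, ht.2]
  exact ((hα _ hmem).comp_sub_const t t₀).hasDerivWithinAt

theorem IsIntegralCurveOn.piecewise_Icc {v : ℝ → E → E} {γ δ : ℝ → E} {a b c : ℝ}
    (hγ : IsIntegralCurveOn γ v (Icc a b)) (hδ : IsIntegralCurveOn δ v (Icc b c))
    (hb : δ b = γ b) (hab : a ≤ b) (hbc : b ≤ c) :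
    IsIntegralCurveOn (fun t ↦ if t ≤ b then γ t else δ t) v (Icc a c) := by
  have hγ' : EqOn (fun t ↦ if t ≤ b then γ t else δ t) γ (Icc a b) := fun t ht ↦ if_pos ht.2
  have hδ' : EqOn (fun t ↦ if t ≤ b then γ t else δ t) δ (Icc b c) := fun t ht ↦ by
    rcases ht.1.eq_or_lt with rfl | hlt
    · simp [hb]
    · exact if_neg hlt.not_ge
  intro t ht
  rw [← Icc_union_Icc_eq_Icc hab hbc]
  refine HasDerivWithinAt.union ?_ ?_
  · by_cases h : t ∈ Icc a b
    · exact hγ' h ▸ (hγ t h).congr_of_mem hγ' h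
    · exact HasFDerivWithinAt.of_notMem_closure (by rwa [closure_Icc])
  · by_cases h : t ∈ Icc b c
    · exact hδ' h ▸ (hδ t h).congr_of_mem hδ' h
    · exact HasFDerivWithinAt.of_notMem_closure (by rwa [closure_Icc])

structure PartialSolution (V : E → E) (x₀ : E) where
  T : ℝ
  γ : ℝ → E
  T_nonneg : 0 ≤ T
  γ_zero : γ 0 = x₀
  isIntegralCurveOn : IsIntegralCurveOn γ (fun _ ↦ V) (Icc 0 T)

namespace PartialSolution

variable {V : E → E} {x₀ : E}

instance : Preorder (PartialSolution V x₀) where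
  le σ τ := σ.T ≤ τ.T ∧ EqOn σ.γ τ.γ (Icc 0 σ.T)
  le_refl σ := ⟨le_rfl, fun _ _ ↦ rfl⟩
  le_trans _ _ _ hστ hτυ :=
    ⟨hστ.1.trans hτυ.1, fun _ ht ↦ (hστ.2 ht).trans (hτυ.2 (Icc_subset_Icc_right hστ.1 ht))⟩

variable (V x₀) in
def const : PartialSolution V x₀ where
  T := 0
  γ _ := x₀
  T_nonneg := le_rfl
  γ_zero := rfl
  isIntegralCurveOn _ _ := by
    rw [Icc_self]
    exact HasFDerivWithinAt.singleton

theorem const_le (σ : PartialSolution V x₀) : const V x₀ ≤ σ :=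
  ⟨σ.T_nonneg, fun t ht ↦ by
    obtain rfl : t = 0 := le_antisymm ht.2 ht.1
    exact σ.γ_zero.symm⟩

theorem hasDerivWithinAt_comp {F : Type*} [NormedAddCommGroup F] [NormedSpace ℝ F]
    (σ : PartialSolution V x₀) {u : E → F} {t : ℝ} (hu : DifferentiableAt ℝ u (σ.γ t))
    (ht : t ∈ Icc 0 σ.T) :
    HasDerivWithinAt (fun s ↦ u (σ.γ s)) (fderiv ℝ u (σ.γ t) (V (σ.γ t))) (Icc 0 σ.T) t :=
  hu.hasFDerivAt.comp_hasDerivWithinAt t (σ.isIntegralCurveOn t ht)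

theorem dist_le_of_le {σ τ : PartialSolution V x₀} (h : σ ≤ τ) {S : ℝ}
    (hS : ∀ t ∈ Icc 0 τ.T, ‖V (τ.γ t)‖ ≤ S) :
    dist (σ.γ σ.T) (τ.γ τ.T) ≤ S * (τ.T - σ.T) := by
  rw [h.2 ⟨σ.T_nonneg, le_rfl⟩, dist_comm, dist_eq_norm]
  exact norm_image_sub_le_of_norm_deriv_le_segment'
    (τ.isIntegralCurveOn.mono (Icc_subset_Icc_left σ.T_nonneg))
    (fun t ht ↦ hS t ⟨σ.T_nonneg.trans ht.1, ht.2.le⟩) τ.T (right_mem_Icc.2 h.1)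

theorem exists_le_T_eq_add (σ : PartialSolution V x₀) {p : E} {r ε : ℝ} (hε : 0 < ε)
    (hloc : ∀ q ∈ closedBall p r, ∀ t₀ : ℝ, ∃ α : ℝ → E, α t₀ = q ∧
      IsIntegralCurveOn α (fun _ ↦ V) (Icc t₀ (t₀ + ε))) (hσ : σ.γ σ.T ∈ closedBall p r) :
    ∃ τ : PartialSolution V x₀, σ ≤ τ ∧ τ.T = σ.T + ε := by
  obtain ⟨α, hα0, hα⟩ := hloc _ hσ σ.T
  refine ⟨⟨σ.T + ε, _, by linarith [σ.T_nonneg], by simp [σ.T_nonneg, σ.γ_zero],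
    σ.isIntegralCurveOn.piecewise_Icc hα hα0 σ.T_nonneg (by linarith)⟩,
    ⟨by simp; linarith, fun t ht ↦ by simp [ht.2]⟩, rfl⟩

theorem exists_le_forall_le_T_le (σ : PartialSolution V x₀) :
    ∃ τ, σ ≤ τ ∧ ∀ τ', σ ≤ τ' → ∀ e ≤ 1, σ.T + e ≤ τ'.T → e ≤ 2 * (τ.T - σ.T) := by
  set A := {e : ℝ | e ≤ 1 ∧ ∃ τ', σ ≤ τ' ∧ σ.T + e ≤ τ'.T}
  have hA : BddAbove A := ⟨1, fun e he ↦ he.1⟩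
  obtain ⟨τ, hστ, hτ⟩ : ∃ τ, σ ≤ τ ∧ sSup A ≤ 2 * (τ.T - σ.T) := by
    rcases le_or_gt (sSup A) 0 with hs | hs
    · exact ⟨σ, le_rfl, by simpa using hs⟩
    obtain ⟨e, ⟨-, τ, hστ, hτ⟩, he⟩ :=
      exists_lt_of_lt_csSup (⟨0, by simp, σ, le_rfl, by simp⟩ : A.Nonempty) (half_lt_self hs)
    exact ⟨τ, hστ, by linarith⟩
  exact ⟨τ, hστ, fun τ' hστ' e he hτ' ↦ (le_csSup hA ⟨he, τ', hστ', hτ'⟩).trans hτ⟩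

theorem exists_le_T [CompleteSpace E] (hV : ContDiff ℝ 1 V) {S : ℝ}
    (hS : ∀ σ : PartialSolution V x₀, ∀ t ∈ Icc 0 σ.T, ‖V (σ.γ t)‖ ≤ S) (T : ℝ) :
    ∃ σ : PartialSolution V x₀, T ≤ σ.T := by
  choose step hle hstep using exists_le_forall_le_T_le (V := V) (x₀ := x₀)
  set σ : ℕ → PartialSolution V x₀ := fun n ↦ step^[n] (const V x₀)
  have hσ_succ (n : ℕ) : σ (n + 1) = step (σ n) := Function.iterate_succ_apply' _ _ _
  have hσ : Monotone σ := monotone_nat_of_le_succ fun n ↦ hσ_succ n ▸ hle _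
  have hT : Monotone fun n ↦ (σ n).T := fun _ _ h ↦ (hσ h).1
  by_contra! hbdd
  obtain ⟨L, hL⟩ : ∃ L, Tendsto (fun n ↦ (σ n).T) atTop (𝓝 L) :=
    ⟨_, tendsto_atTop_ciSup hT ⟨T, by rintro _ ⟨n, rfl⟩; exact (hbdd _).le⟩⟩
  have hS₀ : 0 ≤ S := (norm_nonneg _).trans (hS (const V x₀) 0 ⟨le_rfl, le_rfl⟩)
  have hcauchy : CauchySeq fun n ↦ (σ n).γ (σ n).T := by
    refine cauchySeq_of_le_tendsto_0' (fun n ↦ S * (L - (σ n).T)) (fun n m hnm ↦ ?_) ?_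
    · refine ((σ n).dist_le_of_le (hσ hnm) (hS _)).trans ?_
      gcongr
      exact hT.ge_of_tendsto hL m
    · simpa using ((tendsto_const_nhds (x := L)).sub hL).const_mul S
  obtain ⟨p, hp⟩ := cauchySeq_tendsto_of_complete hcauchy
  obtain ⟨r, hr, ε, hε, hloc⟩ :=
    hV.contDiffAt.exists_forall_mem_closedBall_forall_exists_isIntegralCurveOn_Icc (p := p)
  have hstep_ge : ∀ᶠ n in atTop, min ε 1 ≤ 2 * ((σ (n + 1)).T - (σ n).T) := by
    filter_upwards [hp.eventually (closedBall_mem_nhds p hr)] with n hn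
    obtain ⟨τ, hτ, hτT⟩ := (σ n).exists_le_T_eq_add hε hloc hn
    rw [hσ_succ]
    exact hstep _ τ hτ _ (min_le_right _ _) (by rw [hτT]; gcongr; exact min_le_left _ _)
  have hstep_lim : Tendsto (fun n ↦ 2 * ((σ (n + 1)).T - (σ n).T)) atTop (𝓝 0) := by
    simpa using ((hL.comp (tendsto_add_atTop_nat 1)).sub hL).const_mul 2
  obtain ⟨n, hn₁, hn₂⟩ :=
    (hstep_ge.and (hstep_lim.eventually (gt_mem_nhds (lt_min hε one_pos)))).exists
  exact hn₂.not_ge hn₁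

end PartialSolution

end ODE

section Gradient

variable {H : Type*} [NormedAddCommGroup H] [InnerProductSpace ℝ H] [CompleteSpace H]
  {f g : H → ℝ} {x : H}

theorem ContDiff.gradient {m n : WithTop ℕ∞} (hf : ContDiff ℝ n f) (hmn : m + 1 ≤ n) :
    ContDiff ℝ m (∇ f) :=
  (toDual ℝ H).symm.contDiff.comp (hf.fderiv_right hmn)

theorem inner_fderiv_gradient_apply (x v w : H) :
    ⟪fderiv ℝ (∇ f) x v, w⟫ = fderiv ℝ (fderiv ℝ f) x v w := by
  change ⟪fderiv ℝ ((toDual ℝ H).symm ∘ fderiv ℝ f) x v, w⟫ = _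
  rw [LinearIsometryEquiv.comp_fderiv]
  exact toDual_symm_apply

theorem ContDiffAt.inner_fderiv_gradient_comm (hf : ContDiffAt ℝ 2 f x) (v w : H) :
    ⟪fderiv ℝ (∇ f) x v, w⟫ = ⟪fderiv ℝ (∇ f) x w, v⟫ := by
  rw [inner_fderiv_gradient_apply, inner_fderiv_gradient_apply]
  exact hf.isSymmSndFDerivAt (by simp) v w

theorem ConvexOn.add_inner_gradient_le (hc : ConvexOn ℝ univ f) (hf : DifferentiableAt ℝ f x)
    (y : H) : f x + ⟪∇ f x, y - x⟫ ≤ f y := by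
  set ℓ : ℝ →ᵃ[ℝ] H := AffineMap.lineMap x y
  have hφ : HasDerivAt (f ∘ ℓ) (fderiv ℝ f x (y - x)) 0 := by
    refine HasFDerivAt.comp_hasDerivAt (0 : ℝ) ?_ AffineMap.hasDerivAt_lineMap
    simpa [ℓ] using hf.hasFDerivAt
  have := (hc.comp_affineMap ℓ).le_slope_of_hasDerivAt (mem_univ 0) (mem_univ 1) one_pos hφ
  simp [slope, ℓ] at this
  rw [inner_gradient_left, map_sub]
  linarith

theorem ConvexOn.inner_gradient_sub_gradient_nonneg_s14 (hc : ConvexOn ℝ univ f)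
    (hf : Differentiable ℝ f) (x y : H) : 0 ≤ ⟪∇ f x - ∇ f y, x - y⟫ := by
  have hxy := hc.add_inner_gradient_le (hf x) y
  have hyx := hc.add_inner_gradient_le (hf y) x
  rw [← neg_sub x y, inner_neg_right] at hxy
  rw [inner_sub_left]
  linarith

theorem ConvexOn.inner_fderiv_gradient_apply_self_nonneg (hc : ConvexOn ℝ univ f)
    (hf : Differentiable ℝ f) (hdf : DifferentiableAt ℝ (∇ f) x) (w : H) :
    0 ≤ ⟪fderiv ℝ (∇ f) x w, w⟫ := by
  have hline : HasDerivAt (fun t : ℝ ↦ x + t • w) w 0 := by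
    simpa using ((hasDerivAt_id (0 : ℝ)).smul_const w).const_add x
  have hφ : HasDerivAt (fun t : ℝ ↦ ⟪∇ f (x + t • w), w⟫) ⟪fderiv ℝ (∇ f) x w, w⟫ 0 := by
    have hdf' : HasFDerivAt (∇ f) (fderiv ℝ (∇ f) x) (x + (0 : ℝ) • w) := by
      simpa using hdf.hasFDerivAt
    have := hdf'.comp_hasDerivAt (0 : ℝ) hline
    exact this.inner ℝ (hasDerivAt_const _ w) |>.congr_deriv (by simp)
  refine hφ.nonneg_of_monotone fun s t hst ↦ ?_
  have := hc.inner_gradient_sub_gradient_nonneg_s14 hf (x + t • w) (x + s • w)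
  rw [show x + t • w - (x + s • w) = (t - s) • w by module, inner_smul_right, inner_sub_left]
    at this
  rcases hst.eq_or_lt with rfl | hlt
  · rfl
  · nlinarith [sub_pos.2 hlt]

theorem inner_fderiv_eq_of_norm_eq {E F : Type*} [NormedAddCommGroup E] [NormedSpace ℝ E]
    [NormedAddCommGroup F] [InnerProductSpace ℝ F] {u w : E → F} {x : E}
    (hu : DifferentiableAt ℝ u x) (hw : DifferentiableAt ℝ w x) (h : ∀ y, ‖u y‖ = ‖w y‖)
    (v : E) : ⟪u x, fderiv ℝ u x v⟫ = ⟪w x, fderiv ℝ w x v⟫ := by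
  have hu' := hu.hasFDerivAt.norm_sq
  rw [show (‖u ·‖ ^ 2) = (‖w ·‖ ^ 2) by simp only [h]] at hu'
  simpa using congrArg (· v) (hu'.unique hw.hasFDerivAt.norm_sq)

theorem fderiv_gradient_apply_gradient_eq (hf : ContDiff ℝ 2 f) (hg : ContDiff ℝ 2 g)
    (heq : ∀ z, ‖∇ f z‖ = ‖∇ g z‖) (x : H) :
    fderiv ℝ (∇ f) x (∇ f x) = fderiv ℝ (∇ g) x (∇ g x) := by
  have hdf := (hf.gradient (m := 1) le_rfl).differentiable one_ne_zero x
  have hdg := (hg.gradient (m := 1) le_rfl).differentiable one_ne_zero x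
  refine ext_inner_right ℝ fun v ↦ ?_
  rw [hf.contDiffAt.inner_fderiv_gradient_comm, hg.contDiffAt.inner_fderiv_gradient_comm,
    real_inner_comm (∇ f x), real_inner_comm (∇ g x)]
  exact inner_fderiv_eq_of_norm_eq hdf hdg heq v

variable {x₀ : H}

theorem ConvexOn.antitoneOn_norm_gradient_comp (hf : ContDiff ℝ 2 f) (hc : ConvexOn ℝ univ f)
    (σ : PartialSolution (-∇ f) x₀) : AntitoneOn (fun t ↦ ‖∇ f (σ.γ t)‖) (Icc 0 σ.T) := by
  have hdf := (hf.gradient (m := 1) le_rfl).differentiable one_ne_zero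
  refine antitoneOn_Icc_norm_of_inner_deriv_nonpos (fun t ht ↦ σ.hasDerivWithinAt_comp (hdf _) ht)
    fun t _ ↦ ?_
  rw [Pi.neg_apply, map_neg, inner_neg_right, real_inner_comm, neg_nonpos]
  exact hc.inner_fderiv_gradient_apply_self_nonneg (hf.differentiable two_ne_zero) (hdf _) _

theorem ConvexOn.norm_gradient_comp_le (hf : ContDiff ℝ 2 f) (hc : ConvexOn ℝ univ f)
    (σ : PartialSolution (-∇ f) x₀) {t : ℝ} (ht : t ∈ Icc 0 σ.T) :
    ‖∇ f (σ.γ t)‖ ≤ ‖∇ f x₀‖ := by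
  simpa [σ.γ_zero] using hc.antitoneOn_norm_gradient_comp hf σ ⟨le_rfl, σ.T_nonneg⟩ ht ht.1

theorem ConvexOn.add_mul_norm_sq_gradient_le (hf : ContDiff ℝ 2 f) (hc : ConvexOn ℝ univ f)
    (σ : PartialSolution (-∇ f) x₀) :
    f (σ.γ σ.T) + σ.T * ‖∇ f (σ.γ σ.T)‖ ^ 2 ≤ f x₀ := by
  have hdf := hf.differentiable two_ne_zero
  have hanti := antitoneOn_Icc_of_hasDerivWithinAt_nonpos
    (φ := fun t ↦ f (σ.γ t) + t * ‖∇ f (σ.γ σ.T)‖ ^ 2)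
    (fun t ht ↦ (σ.hasDerivWithinAt_comp (hdf _) ht).add
      ((hasDerivWithinAt_id t _).mul_const _)) fun t ht ↦ ?_
  · simpa [σ.γ_zero] using hanti ⟨le_rfl, σ.T_nonneg⟩ ⟨σ.T_nonneg, le_rfl⟩ σ.T_nonneg
  have := hc.antitoneOn_norm_gradient_comp hf σ (Ioo_subset_Icc_self ht) ⟨σ.T_nonneg, le_rfl⟩
    ht.2.le
  rw [Pi.neg_apply, ← inner_gradient_left, inner_neg_right, real_inner_self_eq_norm_sq]
  nlinarith [norm_nonneg (∇ f (σ.γ σ.T))]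

theorem ConvexOn.norm_sub_le_mul (hf : ContDiff ℝ 2 f) (hc : ConvexOn ℝ univ f)
    (σ : PartialSolution (-∇ f) x₀) : ‖σ.γ σ.T - x₀‖ ≤ ‖∇ f x₀‖ * σ.T := by
  simpa [PartialSolution.const, dist_eq_norm'] using PartialSolution.dist_le_of_le σ.const_le
    fun t ht ↦ (norm_neg _).trans_le (hc.norm_gradient_comp_le hf σ ht)

theorem ConvexOn.monotoneOn_norm_gradient_sub_comp (hf : ContDiff ℝ 2 f) (hg : ContDiff ℝ 2 g)
    (hcg : ConvexOn ℝ univ g) (heq : ∀ z, ‖∇ f z‖ = ‖∇ g z‖) (σ : PartialSolution (-∇ f) x₀) :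
    MonotoneOn (fun t ↦ ‖∇ f (σ.γ t) - ∇ g (σ.γ t)‖) (Icc 0 σ.T) := by
  have hdf := (hf.gradient (m := 1) le_rfl).differentiable one_ne_zero
  have hdg := (hg.gradient (m := 1) le_rfl).differentiable one_ne_zero
  refine monotoneOn_Icc_norm_of_inner_deriv_nonneg (fun t ht ↦
    (σ.hasDerivWithinAt_comp (hdf _) ht).sub (σ.hasDerivWithinAt_comp (hdg _) ht)) fun t _ ↦ ?_
  -- by the Hessian identity, `∇²f (-∇f) - ∇²g (-∇f) = ∇²g (∇f - ∇g)`
  rw [Pi.neg_apply, map_neg, map_neg, fderiv_gradient_apply_gradient_eq hf hg heq, neg_sub_neg,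
    ← map_sub, real_inner_comm]
  exact hcg.inner_fderiv_gradient_apply_self_nonneg (hg.differentiable two_ne_zero) (hdg _) _

theorem ConvexOn.norm_sq_gradient_sub_mul_le (hf : ContDiff ℝ 2 f) (hg : ContDiff ℝ 2 g)
    (hcf : ConvexOn ℝ univ f) (hcg : ConvexOn ℝ univ g) (heq : ∀ z, ‖∇ f z‖ = ‖∇ g z‖)
    (σ : PartialSolution (-∇ f) x₀) (z : H) :
    ‖∇ f x₀ - ∇ g x₀‖ ^ 2 * σ.T ≤
      4 * (f x₀ - f z + ‖∇ f z‖ * ‖x₀ - z‖) + 4 * ‖∇ f z‖ * ‖∇ f x₀‖ * σ.T := by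
  set y := σ.γ σ.T
  have hgap : ‖∇ f x₀ - ∇ g x₀‖ ≤ 2 * ‖∇ f y‖ := calc
    ‖∇ f x₀ - ∇ g x₀‖ ≤ ‖∇ f y - ∇ g y‖ := by
      simpa [σ.γ_zero] using hcg.monotoneOn_norm_gradient_sub_comp hf hg heq σ
        ⟨le_rfl, σ.T_nonneg⟩ ⟨σ.T_nonneg, le_rfl⟩ σ.T_nonneg
    _ ≤ ‖∇ f y‖ + ‖∇ g y‖ := norm_sub_le _ _
    _ = 2 * ‖∇ f y‖ := by rw [← heq]; ring
  have hdecay := hcf.add_mul_norm_sq_gradient_le hf σ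
  have hsupport : f z - ‖∇ f z‖ * ‖y - z‖ ≤ f y := by
    linarith [hcf.add_inner_gradient_le (hf.differentiable two_ne_zero z) y,
      neg_le_of_abs_le (abs_real_inner_le_norm (∇ f z) (y - z))]
  have hdist : ‖y - z‖ ≤ ‖∇ f x₀‖ * σ.T + ‖x₀ - z‖ := calc
    ‖y - z‖ ≤ ‖y - x₀‖ + ‖x₀ - z‖ := norm_sub_le_norm_sub_add_norm_sub _ _ _
    _ ≤ ‖∇ f x₀‖ * σ.T + ‖x₀ - z‖ := by grw [hcf.norm_sub_le_mul hf σ]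
  calc ‖∇ f x₀ - ∇ g x₀‖ ^ 2 * σ.T ≤ (2 * ‖∇ f y‖) ^ 2 * σ.T := by
        gcongr
        exact σ.T_nonneg
    _ ≤ 4 * (f x₀ - f y) := by linarith
    _ ≤ 4 * (f x₀ - f z + ‖∇ f z‖ * ‖x₀ - z‖) + 4 * ‖∇ f z‖ * ‖∇ f x₀‖ * σ.T := by
        nlinarith [mul_le_mul_of_nonneg_left hdist (norm_nonneg (∇ f z))]

theorem le_of_forall_exists_le_mul_le_add {e A B : ℝ}
    (h : ∀ T, ∃ T' ≥ T, e * T' ≤ A + B * T') : e ≤ B := by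
  by_contra! hBe
  obtain ⟨T, hT, hle⟩ := h ((|A| + 1) / (e - B))
  rw [ge_iff_le, div_le_iff₀' (sub_pos.2 hBe)] at hT
  nlinarith [le_abs_self A]

theorem ConvexOn.gradient_eq_of_norm_gradient_eq (hf : ContDiff ℝ 2 f) (hg : ContDiff ℝ 2 g)
    (hcf : ConvexOn ℝ univ f) (hcg : ConvexOn ℝ univ g) (heq : ∀ z, ‖∇ f z‖ = ‖∇ g z‖)
    (hinf : ⨅ z, ‖∇ f z‖ = 0) : ∇ f = ∇ g := by
  funext x₀
  have hflow (T : ℝ) : ∃ σ : PartialSolution (-∇ f) x₀, T ≤ σ.T :=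
    PartialSolution.exists_le_T (hf.gradient le_rfl).neg
      (fun σ _ ht ↦ (norm_neg _).trans_le (hcf.norm_gradient_comp_le hf σ ht)) T
  have hz (z : H) : ‖∇ f x₀ - ∇ g x₀‖ ^ 2 ≤ 4 * ‖∇ f x₀‖ * ‖∇ f z‖ := by
    refine le_of_forall_exists_le_mul_le_add (A := 4 * (f x₀ - f z + ‖∇ f z‖ * ‖x₀ - z‖))
      fun T ↦ ?_
    obtain ⟨σ, hσ⟩ := hflow T
    exact ⟨σ.T, hσ, (hcf.norm_sq_gradient_sub_mul_le hf hg hcg heq σ z).trans_eq (by ring)⟩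
  have hle : ‖∇ f x₀ - ∇ g x₀‖ ^ 2 ≤ 0 := by
    simpa [← Real.mul_iInf_of_nonneg (by positivity : (0 : ℝ) ≤ 4 * ‖∇ f x₀‖), hinf] using
      le_ciInf hz
  simpa [sub_eq_zero] using le_antisymm hle (sq_nonneg _)

theorem exists_eq_add_const_of_gradient_eq (hf : Differentiable ℝ f) (hg : Differentiable ℝ g)
    (h : ∇ f = ∇ g) : ∃ c, ∀ x, f x = g x + c := by
  refine ⟨f 0 - g 0, fun x ↦ ?_⟩
  have := is_const_of_fderiv_eq_zero (hf.sub hg) (fun y ↦ ?_) x 0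
  · simp only [Pi.sub_apply] at this
    linarith
  rw [fderiv_sub (hf y) (hg y), ← toDual_gradient, ← toDual_gradient, h, sub_self]

end Gradient

/-- Theorem 2 (determination via modulus of gradient): if `ψ₁, ψ₂` are convex `C²`
functions with `‖∇ψ₁(z)‖ = ‖∇ψ₂(z)‖` for all `z` and `inf_z ‖∇ψ₁(z)‖ = 0`, then
`ψ₁ = ψ₂ + c` for some constant `c ∈ ℝ`. -/
theorem stmt_14 {H : Type*} [NormedAddCommGroup H] [InnerProductSpace ℝ H] [CompleteSpace H]
    (ψ₁ ψ₂ : H → ℝ) (hψ₁ : ContDiff ℝ 2 ψ₁) (hψ₂ : ContDiff ℝ 2 ψ₂)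
    (hconv₁ : ConvexOn ℝ univ ψ₁) (hconv₂ : ConvexOn ℝ univ ψ₂)
    (heq : ∀ z : H, ‖gradient ψ₁ z‖ = ‖gradient ψ₂ z‖)
    (hinf : ⨅ z : H, ‖gradient ψ₁ z‖ = 0) :
    ∃ c : ℝ, ∀ x : H, ψ₁ x = ψ₂ x + c :=
  exists_eq_add_const_of_gradient_eq (hψ₁.differentiable two_ne_zero)
    (hψ₂.differentiable two_ne_zero)
    (hconv₁.gradient_eq_of_norm_gradient_eq hψ₁ hψ₂ hconv₂ heq hinf)
end
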